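/- Let g = sl(2,ℝ), realized as the 3-dimensional real Lie algebra with basis e₁, e₂, e₃ and brackets [e₁,e₃] = e₂, [e₂,e₃] = e₁, [e₁,e₂] = e₃. Then g × g admits an integrable complex structure. -/

import Mathlib

/-!
Write `e₁, e₂, e₃ = b 0, b 1, b 2`. Identify `g × g` with the complexification `g ⊗ ℂ` via
`(x, y) ↦ x + i y`, and let `A = ad e₂`, which rotates `span {e₁, e₃}` and kills `e₂`, and `P` the
projection onto `ℝ e₂` along `span {e₁, e₃}`. Then `(A + iP)² = A² - P² + i (AP + PA) = -1`, so
multiplication by `A + iP` is a complex structure `J`.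

For any `J` with `J² = -1` the Nijenhuis tensor is alternating and satisfies
`N (J x) y = N x (J y) = -J (N x y)`, so it vanishes as soon as it vanishes on pairs from a
`J`-complex basis. For the basis `(e₁, 0), (0, e₁), (e₂, 0)` only three brackets remain to be
checked.
-/

/-- Componentwise bracket on the product. -/
instance prodBracket {L : Type*} [LieRing L] : Bracket (L × L) (L × L) :=
  ⟨fun x y => (⁅x.1, y.1⁆, ⁅x.2, y.2⁆)⟩

instance prodLieRing {L : Type*} [LieRing L] : LieRing (L × L) where
  add_lie x y z := by ext <;> simp [Bracket.bracket]
  lie_add x y z := by ext <;> simp [Bracket.bracket]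
  lie_self x := by ext <;> simp [Bracket.bracket]
  leibniz_lie x y z := by ext <;> simp [Bracket.bracket]

instance prodLieAlgebra {L : Type*} [LieRing L] [LieAlgebra ℝ L] : LieAlgebra ℝ (L × L) where
  lie_smul t x y := by ext <;> simp [Bracket.bracket]

section Nijenhuis

variable {R L : Type*} [CommRing R] [LieRing L] [LieAlgebra R L]

def nijenhuis (J : L →ₗ[R] L) : L →ₗ[R] L →ₗ[R] L :=
  LinearMap.mk₂ R (fun x y => ⁅x, y⁆ + J ⁅J x, y⁆ + J ⁅x, J y⁆ - ⁅J x, J y⁆)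
    (fun x x' y => by simp only [map_add, add_lie]; abel)
    (fun c x y => by simp only [map_smul, smul_lie, smul_add, smul_sub])
    (fun x y y' => by simp only [map_add, lie_add]; abel)
    (fun c x y => by simp only [map_smul, lie_smul, smul_add, smul_sub])

variable {J : L →ₗ[R] L}

theorem nijenhuis_apply (x y : L) :
    nijenhuis J x y = ⁅x, y⁆ + J ⁅J x, y⁆ + J ⁅x, J y⁆ - ⁅J x, J y⁆ :=
  rfl

theorem nijenhuis_swap (x y : L) : nijenhuis J y x = -nijenhuis J x y := by
  rw [nijenhuis_apply, nijenhuis_apply, ← lie_skew y x, ← lie_skew (J y) x, ← lie_skew y (J x),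
    ← lie_skew (J y) (J x)]
  simp only [map_neg]
  abel

theorem nijenhuis_self (x : L) : nijenhuis J x x = 0 := by
  rw [nijenhuis_apply, lie_self, lie_self, ← lie_skew x (J x), map_neg]
  abel

theorem nijenhuis_apply_left (hJ : ∀ x, J (J x) = -x) (x y : L) :
    nijenhuis J (J x) y = -J (nijenhuis J x y) := by
  simp only [nijenhuis_apply, hJ, map_add, map_sub, neg_lie, map_neg]
  abel

theorem nijenhuis_apply_right (hJ : ∀ x, J (J x) = -x) (x y : L) :
    nijenhuis J x (J y) = -J (nijenhuis J x y) := by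
  rw [← neg_neg (nijenhuis J x (J y)), ← nijenhuis_swap, nijenhuis_apply_left hJ, nijenhuis_swap,
    map_neg, neg_neg]

theorem nijenhuis_eq_zero_of_span {ι : Type*} [LinearOrder ι] (hJ : ∀ x, J (J x) = -x)
    {u : ι → L} (hu : Submodule.span R (Set.range (Sum.elim u (J ∘ u))) = ⊤)
    (h : ∀ i j, i < j → nijenhuis J (u i) (u j) = 0) : nijenhuis J = 0 := by
  have hpair (i j : ι) : nijenhuis J (u i) (u j) = 0 := by
    rcases lt_trichotomy i j with hij | rfl | hji
    · exact h i j hij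
    · exact nijenhuis_self _
    · rw [nijenhuis_swap, h j i hji, neg_zero]
  have hrow (i : ι) : nijenhuis J (u i) = 0 := by
    refine LinearMap.ext_on_range hu fun j => ?_
    rcases j with j | j
    · exact hpair i j
    · simp [nijenhuis_apply_right hJ, hpair]
  refine LinearMap.ext_on_range hu fun i => ?_
  rcases i with i | i
  · exact hrow i
  · ext y
    simp [nijenhuis_apply_left hJ, hrow]

end Nijenhuis

section AddIMul

variable {R M : Type*} [Ring R] [AddCommGroup M] [Module R M] (A P : M →ₗ[R] M)

/-- Multiplication by `A + i P` on `M × M`, read as `M ⊗ ℂ` via `(x, y) ↦ x + i y`. -/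
def addIMul : M × M →ₗ[R] M × M :=
  (A ∘ₗ LinearMap.fst R M M - P ∘ₗ LinearMap.snd R M M).prod
    (A ∘ₗ LinearMap.snd R M M + P ∘ₗ LinearMap.fst R M M)

@[simp]
theorem addIMul_apply (x y : M) : addIMul A P (x, y) = (A x - P y, A y + P x) :=
  rfl

variable {A P}

theorem addIMul_addIMul (hsq : ∀ x, A (A x) - P (P x) = -x) (hanti : ∀ x, A (P x) + P (A x) = 0)
    (z : M × M) : addIMul A P (addIMul A P z) = -z := by
  obtain ⟨x, y⟩ := z
  ext
  · calc A (A x - P y) - P (A y + P x) = (A (A x) - P (P x)) - (A (P y) + P (A y)) := by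
          simp only [map_sub, map_add]; abel
      _ = -x := by rw [hsq, hanti, sub_zero]
  · calc A (A y + P x) + P (A x - P y) = (A (A y) - P (P y)) + (A (P x) + P (A x)) := by
          simp only [map_sub, map_add]; abel
      _ = -y := by rw [hsq, hanti, add_zero]

end AddIMul

section SL2

variable {g : Type*} [LieRing g] [LieAlgebra ℝ g] (b : Module.Basis (Fin 3) ℝ g)

noncomputable def sl2ComplexStructure : (g × g) →ₗ[ℝ] (g × g) :=
  addIMul (LieAlgebra.ad ℝ g (b 1)) ((b.coord 1).smulRight (b 1))

@[simp]
theorem sl2ComplexStructure_apply (x y : g) :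
    sl2ComplexStructure b (x, y) = (⁅b 1, x⁆ - b.coord 1 y • b 1, ⁅b 1, y⁆ + b.coord 1 x • b 1) :=
  rfl

variable {b}

theorem sl2ComplexStructure_sq (h23 : ⁅b 1, b 2⁆ = b 0) (h12 : ⁅b 0, b 1⁆ = b 2) (z : g × g) :
    sl2ComplexStructure b (sl2ComplexStructure b z) = -z := by
  have h10 : ⁅b 1, b 0⁆ = -b 2 := by rw [← lie_skew, h12]
  set A : g →ₗ[ℝ] g := LieAlgebra.ad ℝ g (b 1)
  set P : g →ₗ[ℝ] g := (b.coord 1).smulRight (b 1)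
  have hsq : A ∘ₗ A - P ∘ₗ P = -LinearMap.id := b.ext fun i => by
    fin_cases i <;> simp [A, P, h10, h23]
  have hanti : A ∘ₗ P + P ∘ₗ A = 0 := b.ext fun i => by
    fin_cases i <;> simp [A, P, h10, h23]
  exact addIMul_addIMul (LinearMap.congr_fun hsq) (LinearMap.congr_fun hanti) z

theorem sl2ComplexStructure_nijenhuis (h23 : ⁅b 1, b 2⁆ = b 0) (h12 : ⁅b 0, b 1⁆ = b 2) :
    nijenhuis (sl2ComplexStructure b) = 0 := by
  have h10 : ⁅b 1, b 0⁆ = -b 2 := by rw [← lie_skew, h12]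
  have h21 : ⁅b 2, b 1⁆ = -b 0 := by rw [← lie_skew, h23]
  set u : Fin 3 → g × g := ![(b 0, 0), (0, b 0), (b 1, 0)]
  refine nijenhuis_eq_zero_of_span (sl2ComplexStructure_sq h23 h12) (u := u) ?span ?brackets
  case span =>
    set S := Submodule.span ℝ (Set.range (Sum.elim u (sl2ComplexStructure b ∘ u)))
    have mem k : _ ∈ S := Submodule.subset_span ⟨k, rfl⟩
    rw [eq_top_iff, ← (b.prod b).span_eq, Submodule.span_le]
    rintro _ ⟨i | i, rfl⟩ <;> fin_cases i
    · simpa [u] using mem (.inl 0)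
    · simpa [u] using mem (.inl 2)
    · simpa [u, h10] using S.neg_mem (mem (.inr 0))
    · simpa [u] using mem (.inl 1)
    · simpa [u] using mem (.inr 2)
    · simpa [u, h10] using S.neg_mem (mem (.inr 1))
  case brackets =>
    intro i j hij
    fin_cases i <;> fin_cases j <;> simp at hij <;>
      simp [u, nijenhuis_apply, h10, h12, h21, h23]

end SL2

theorem sl2_product_admits_general {g : Type*} [LieRing g] [LieAlgebra ℝ g]
    (b : Module.Basis (Fin 3) ℝ g) 
    (h23 : ⁅b 1, b 2⁆ = b 0) (h12 : ⁅b 0, b 1⁆ = b 2) :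
    ∃ 𝒥 : (g × g) →ₗ[ℝ] (g × g), (∀ x, 𝒥 (𝒥 x) = -x) ∧
      ∀ x y : g × g,
        ⁅x, y⁆ + 𝒥 ⁅𝒥 x, y⁆ + 𝒥 ⁅x, 𝒥 y⁆ - ⁅𝒥 x, 𝒥 y⁆ = 0 :=
  ⟨sl2ComplexStructure b, sl2ComplexStructure_sq h23 h12, fun x y =>
    LinearMap.congr_fun (LinearMap.congr_fun (sl2ComplexStructure_nijenhuis h23 h12) x) y⟩

theorem sl2_product_admits {g : Type*} [LieRing g] [LieAlgebra ℝ g]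
    (b : Module.Basis (Fin 3) ℝ g) 
    (h13 : ⁅b 0, b 2⁆ = b 1) (h23 : ⁅b 1, b 2⁆ = b 0) (h12 : ⁅b 0, b 1⁆ = b 2) :
    ∃ 𝒥 : (g × g) →ₗ[ℝ] (g × g), (∀ x, 𝒥 (𝒥 x) = -x) ∧
      ∀ x y : g × g,
        ⁅x, y⁆ + 𝒥 ⁅𝒥 x, y⁆ + 𝒥 ⁅x, 𝒥 y⁆ - ⁅𝒥 x, 𝒥 y⁆ = 0 :=
  sl2_product_admits_general b h23 h12
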